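/- Separable decomposition of the dual function: for all p⁺, p⁻ : Fin n → Fin n → ℝ, g(p⁺, p⁻) = Σ_{k=1}^{K} [ max over y : Fin n → Fin n → ℕ satisfying the per-switch constraints Σ_j y j i ≤ hig k i and Σ_j y i j ≤ heg k i for all i, of Σ_{i,j} ( u i j k (y i j) + (p⁻ i j − p⁺ i j) · y i j ) ] + Σ_{i,j} ( p⁺ i j · ⌈d i j⌉ − p⁻ i j · ⌊d i j⌋ ). That is, maximizing the Lagrangian over F decomposes into K independent per-switch maximization subproblems plus an additive constant depending only on the dual variables. -/
import Mathlib


open Finset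

/-- Hard (OCS-level) feasibility: for every switch `k` and pod `i`, the total
ingress links `Σ_j x j i k` are at most `hig k i` and the total egress links
`Σ_j x i j k` are at most `heg k i`. -/
def HardFeasible {n K : ℕ} (hig heg : Fin K → Fin n → ℕ)
    (x : Fin n → Fin n → Fin K → ℕ) : Prop :=
  ∀ (k : Fin K) (i : Fin n), (∑ j : Fin n, x j i k) ≤ hig k i ∧ (∑ j : Fin n, x i j k) ≤ heg k i

/-- Soft (matching) constraints: `⌊d i j⌋ ≤ Σ_k x i j k ≤ ⌈d i j⌉` for all `i, j`. -/
def SoftFeasible {n K : ℕ} (d : Fin n → Fin n → ℝ)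
    (x : Fin n → Fin n → Fin K → ℕ) : Prop :=
  ∀ i j : Fin n, ⌊d i j⌋ ≤ (∑ k : Fin K, (x i j k : ℤ)) ∧ (∑ k : Fin K, (x i j k : ℤ)) ≤ ⌈d i j⌉

/-- Primal utility `Σ_{i,j,k} u i j k (x i j k)`. -/
def Util {n K : ℕ} (u : Fin n → Fin n → Fin K → ℕ → ℝ)
    (x : Fin n → Fin n → Fin K → ℕ) : ℝ :=
  ∑ i : Fin n, ∑ j : Fin n, ∑ k : Fin K, u i j k (x i j k)

/-- The Lagrangian
`L(x, p⁺, p⁻) = Σ_{i,j,k} u i j k (x i j k) − Σ_{i,j} p⁺ i j ((Σ_k x i j k) − ⌈d i j⌉)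
  + Σ_{i,j} p⁻ i j ((Σ_k x i j k) − ⌊d i j⌋)`. -/
noncomputable def Lagr {n K : ℕ} (u : Fin n → Fin n → Fin K → ℕ → ℝ) (d : Fin n → Fin n → ℝ)
    (x : Fin n → Fin n → Fin K → ℕ) (pp pm : Fin n → Fin n → ℝ) : ℝ :=
  Util u x
    - ∑ i : Fin n, ∑ j : Fin n, pp i j * (((∑ k : Fin K, (x i j k : ℤ)) - ⌈d i j⌉ : ℤ) : ℝ)
    + ∑ i : Fin n, ∑ j : Fin n, pm i j * (((∑ k : Fin K, (x i j k : ℤ)) - ⌊d i j⌋ : ℤ) : ℝ)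

lemma lagr_eq {n K : ℕ} (u : Fin n → Fin n → Fin K → ℕ → ℝ) (d : Fin n → Fin n → ℝ)
    (x : Fin n → Fin n → Fin K → ℕ) (pp pm : Fin n → Fin n → ℝ) :
    Lagr u d x pp pm =
      (∑ k : Fin K, ∑ i : Fin n, ∑ j : Fin n,
        (u i j k (x i j k) + (pm i j - pp i j) * (x i j k : ℝ)))
      + ∑ i : Fin n, ∑ j : Fin n,
          (pp i j * (⌈d i j⌉ : ℝ) - pm i j * (⌊d i j⌋ : ℝ)) := by
  have h1 : (∑ k : Fin K, ∑ i : Fin n, ∑ j : Fin n,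
        (u i j k (x i j k) + (pm i j - pp i j) * (x i j k : ℝ)))
      = ∑ i : Fin n, ∑ j : Fin n, ∑ k : Fin K,
        (u i j k (x i j k) + (pm i j - pp i j) * (x i j k : ℝ)) := by
    rw [Finset.sum_comm]
    exact Finset.sum_congr rfl fun i _ => Finset.sum_comm
  rw [h1]
  unfold Lagr Util
  rw [← Finset.sum_sub_distrib, ← Finset.sum_add_distrib, ← Finset.sum_add_distrib]
  refine Finset.sum_congr rfl fun i _ => ?_
  rw [← Finset.sum_sub_distrib, ← Finset.sum_add_distrib, ← Finset.sum_add_distrib]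
  refine Finset.sum_congr rfl fun j _ => ?_
  rw [Finset.sum_add_distrib, ← Finset.mul_sum]
  push_cast
  ring

/-- **Separable decomposition of the dual function.** Let `g` be the dual
function (pointwise maximum of the Lagrangian over the hard-feasible set `F`),
and for each switch `k` let `gk pp pm k` be the maximum of the per-switch
subproblem
`max { Σ_{i,j} (u i j k (y i j) + (p⁻ i j − p⁺ i j) · y i j) :
  y : Fin n → Fin n → ℕ, Σ_j y j i ≤ hig k i, Σ_j y i j ≤ heg k i }`.
Then for all dual variables,
`g(p⁺, p⁻) = Σ_k gk k + Σ_{i,j} (p⁺ i j ⌈d i j⌉ − p⁻ i j ⌊d i j⌋)`. -/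
theorem dual_decomposition {n K : ℕ} (hn : 0 < n) (hK : 0 < K)
    (hig heg : Fin K → Fin n → ℕ)
    (u : Fin n → Fin n → Fin K → ℕ → ℝ) (d : Fin n → Fin n → ℝ)
    (g : (Fin n → Fin n → ℝ) → (Fin n → Fin n → ℝ) → ℝ)
    (hg : ∀ pp pm : Fin n → Fin n → ℝ,
      IsGreatest {r : ℝ | ∃ x : Fin n → Fin n → Fin K → ℕ,
        HardFeasible hig heg x ∧ Lagr u d x pp pm = r} (g pp pm))
    (gk : (Fin n → Fin n → ℝ) → (Fin n → Fin n → ℝ) → Fin K → ℝ)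
    (hgk : ∀ (pp pm : Fin n → Fin n → ℝ) (k : Fin K),
      IsGreatest {r : ℝ | ∃ y : Fin n → Fin n → ℕ,
        (∀ i : Fin n, (∑ j : Fin n, y j i) ≤ hig k i ∧ (∑ j : Fin n, y i j) ≤ heg k i) ∧
        (∑ i : Fin n, ∑ j : Fin n,
          (u i j k (y i j) + (pm i j - pp i j) * (y i j : ℝ))) = r} (gk pp pm k)) :
    ∀ pp pm : Fin n → Fin n → ℝ,
      g pp pm = (∑ k : Fin K, gk pp pm k)
        + ∑ i : Fin n, ∑ j : Fin n,
            (pp i j * (⌈d i j⌉ : ℝ) - pm i j * (⌊d i j⌋ : ℝ)) := by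
  intro pp pm
  obtain ⟨⟨x0, hx0, hLx0⟩, hub⟩ := hg pp pm
  apply le_antisymm
  · -- g ≤ RHS
    rw [← hLx0, lagr_eq]
    gcongr with k hk
    exact (hgk pp pm k).2 ⟨fun i j => x0 i j k, fun i => hx0 k i, rfl⟩
  · -- RHS ≤ g
    have h := fun k => (hgk pp pm k).1
    choose y hy1 hy2 using h
    refine hub ⟨fun i j k => y k i j, fun k i => hy1 k i, ?_⟩
    rw [lagr_eq]
    congr 1
    exact Finset.sum_congr rfl fun k _ => hy2 k
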